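/- For every real α > 0, with τ_α = 2(α + 1/α) and t_α = 4α + 2/α, and for every real t: Σ_{m∈ℤ} e^{-πτ_α m²} ϑ₂(i π τ_α m, i t_α) e^{2πimt} = ϑ₂(πt, 2iα) · ϑ₂(πt, iτ_α). -/

import Mathlib

/-- Jacobi theta function ϑ₂(z, ix) = Σ_{k∈ℤ} e^{-πx(k+1/2)²} e^{2iz(k+1/2)}. -/
noncomputable def theta2 (z : ℂ) (x : ℝ) : ℂ :=
  ∑' k : ℤ, Complex.exp (-Real.pi * x * ((k : ℂ) + 1 / 2) ^ 2) *
    Complex.exp (2 * Complex.I * z * ((k : ℂ) + 1 / 2))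

/-! Since `t_α = τ_α + 2α`, completing the square shows that the `k`-th term of
`e^{-πτm²} ϑ₂(iπτm, it_α) e^{2πimt}` is the product of the `(-k-1)`-st term of `ϑ₂(πt, 2iα)` and
the `(k+m)`-th term of `ϑ₂(πt, iτ_α)`. Summing over `m` is thus a reindexing `(m, k) ↦ (k, k+m)` of
the absolutely convergent product of the two theta series, and `k ↦ -k-1` is absorbed by the
evenness of `ϑ₂` in `z`. -/

open Complex Real

theorem tsum_tsum_mul_add_eq_tsum_mul_tsum {G R : Type*} [AddCommGroup G] [NormedRing R]
    [CompleteSpace R] {f g : G → R} (hf : Summable (‖f ·‖)) (hg : Summable (‖g ·‖)) :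
    ∑' m, ∑' k, f k * g (k + m) = (∑' k, f k) * ∑' n, g n := by
  let e : G × G ≃ G × G :=
    { toFun p := (p.2, p.2 + p.1)
      invFun q := (q.2 - q.1, q.1)
      left_inv p := by simp
      right_inv q := by simp }
  have hsum : Summable fun p => f (e p).1 * g (e p).2 :=
    (summable_mul_of_summable_norm hf hg).comp_injective e.injective
  rw [tsum_mul_tsum_of_summable_norm hf hg, ← e.tsum_eq, hsum.tsum_prod]
  rfl

noncomputable def theta2Term (z : ℂ) (x : ℝ) (k : ℤ) : ℂ :=
  cexp (-π * x * ((k : ℂ) + 1 / 2) ^ 2) * cexp (2 * I * z * ((k : ℂ) + 1 / 2))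

theorem theta2_eq_tsum_theta2Term (z : ℂ) (x : ℝ) : theta2 z x = ∑' k, theta2Term z x k := rfl

theorem theta2Term_eq_mul_jacobiTheta₂_term (z : ℂ) (x : ℝ) (k : ℤ) :
    theta2Term z x k =
      cexp (-π * x / 4 + I * z) * jacobiTheta₂_term k (z / π + I * x / 2) (I * x) := by
  have hz : (π : ℂ) * (z / π) = z := mul_div_cancel₀ z (ofReal_ne_zero.2 pi_ne_zero)
  rw [theta2Term, jacobiTheta₂_term, ← Complex.exp_add, ← Complex.exp_add]
  congr 1
  linear_combination (-(π * k * x) - π * k ^ 2 * x) * I_sq - 2 * I * k * hz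

theorem summable_norm_theta2Term (z : ℂ) {x : ℝ} (hx : 0 < x) :
    Summable (‖theta2Term z x ·‖) := by
  have h := ((summable_jacobiTheta₂_term_iff (z / π + I * x / 2) (I * x)).2 (by simpa using hx))
  simpa only [theta2Term_eq_mul_jacobiTheta₂_term] using summable_norm_iff.2 (h.mul_left _)

theorem theta2Term_neg_sub_one (z : ℂ) (x : ℝ) (k : ℤ) :
    theta2Term z x (-1 - k) = theta2Term (-z) x k := by
  simp only [theta2Term]
  push_cast
  ring_nf

theorem theta2_neg (z : ℂ) (x : ℝ) : theta2 (-z) x = theta2 z x := by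
  simp only [theta2_eq_tsum_theta2Term, ← theta2Term_neg_sub_one]
  exact (Equiv.subLeft (-1)).tsum_eq (theta2Term z x)

theorem theta2Term_neg_mul_theta2Term_add (w : ℂ) (x y : ℝ) (k m : ℤ) :
    theta2Term (-w) y k * theta2Term w x (k + m) =
      cexp (-π * x * m ^ 2) * theta2Term (I * π * x * m) (x + y) k * cexp (2 * I * w * m) := by
  simp only [theta2Term, ← Complex.exp_add]
  congr 1
  push_cast
  linear_combination (-2 * π * x * m * (k + 1 / 2)) * I_sq

theorem theta2_mul_theta2 (w : ℂ) {x y : ℝ} (hx : 0 < x) (hy : 0 < y) :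
    theta2 w y * theta2 w x =
      ∑' m : ℤ, cexp (-π * x * m ^ 2) * theta2 (I * π * x * m) (x + y) * cexp (2 * I * w * m) := by
  rw [← theta2_neg w y, theta2_eq_tsum_theta2Term, theta2_eq_tsum_theta2Term,
    ← tsum_tsum_mul_add_eq_tsum_mul_tsum (summable_norm_theta2Term _ hy)
      (summable_norm_theta2Term _ hx)]
  refine tsum_congr fun m => ?_
  simp only [theta2Term_neg_mul_theta2Term_add, tsum_mul_right, tsum_mul_left,
    theta2_eq_tsum_theta2Term]

theorem theta2_sum_identity (α : ℝ) (hα : 0 < α) (t : ℝ) :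
    ∑' m : ℤ, (Real.exp (-Real.pi * (2 * (α + 1 / α)) * (m : ℝ) ^ 2) : ℂ) *
        theta2 (Complex.I * Real.pi * (2 * (α + 1 / α)) * (m : ℂ)) (4 * α + 2 / α) *
        Complex.exp (2 * Real.pi * Complex.I * (m : ℂ) * t)
      = theta2 (Real.pi * t) (2 * α) * theta2 (Real.pi * t) (2 * (α + 1 / α)) := by
  rw [theta2_mul_theta2 (π * t) (by positivity : 0 < 2 * (α + 1 / α)) (by positivity)]
  refine tsum_congr fun m => ?_
  rw [show 4 * α + 2 / α = 2 * (α + 1 / α) + 2 * α by ring, ofReal_exp]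
  push_cast
  ring_nf
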